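/- Let Ω ⊂ ℝⁿ be a nonempty open bounded set, m > 0, and f : Ω × ℝ × ℝⁿ → ℝ a continuous function with |f(x,s,y)| ≤ m for all (x,s,y). Let f₊, f₋ : Ω → ℝ be continuous functions such that, for every x ∈ Ω, f(x,s,y) → f₊(x) as s → +∞ and f(x,s,y) → f₋(x) as s → −∞, uniformly with respect to y ∈ ℝⁿ. Let X₀ be a finite-dimensional subspace of L²(Ω) such that for every ū ∈ X₀ with ū ≠ 0 the Landesman–Lazer condition (LL2) holds: ∫_{{x : ū(x) > 0}} f₊(x) ū(x) dx + ∫_{{x : ū(x) < 0}} f₋(x) ū(x) dx < 0. Then for every M > 0 there exists R > 0 such that for every measurable w : Ω → ℝ with |w(x)| ≤ M for almost every x ∈ Ω, every measurable y : Ω → ℝⁿ, and every ū ∈ X₀ with ‖ū‖_{L²(Ω)} ≥ R, one has ∫_Ω f(x, w(x) + ū(x), y(x)) · ū(x) dx < 0. -/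

import Mathlib

/-!
Suppose the conclusion fails for some `M`. Then there are `u_k ∈ X₀` with `‖u_k‖ → ∞` and
`∫ g_k u_k ≥ 0`, where `g_k = f(·, w_k + u_k, y_k)` is bounded by `m`. As `X₀` is
finite-dimensional, a subsequence of `v_k = u_k / ‖u_k‖` converges in `L²` and a.e. to some
`v ∈ X₀ \ {0}`. Write `∫ g_k v_k = ∫ g_k v + ∫ g_k (v_k - v)`: the second term tends to `0`
by Cauchy–Schwarz, since `‖g_k‖_{L²}` is bounded on the finite-measure set `Ω`. Where `v > 0`
(resp. `v < 0`) we have `w_k + u_k → +∞` (resp. `-∞`), so `g_k → f₊` (resp. `f₋`) by the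
uniform limits, and dominated convergence sends the first term to
`∫_{v>0} f₊ v + ∫_{v<0} f₋ v`. This limit is `≥ 0`, contradicting (LL2).
-/

open MeasureTheory Filter Topology

theorem TendstoUniformly.tendsto_apply_of_const {ι β γ κ : Type*} [UniformSpace γ]
    {F : ι → β → γ} {a : γ} {p : Filter ι} (h : TendstoUniformly F (fun _ => a) p)
    {l : Filter κ} {s : κ → ι} (hs : Tendsto s l p) (y : κ → β) :
    Tendsto (fun k => F (s k) (y k)) l (𝓝 a) :=
  Uniform.tendsto_nhds_right.mpr <|
    (tendstoUniformly_iff_tendsto.mp h).comp (hs.prodMk tendsto_top)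

section Asymptotics

variable {ι : Type*} {l : Filter ι} {c u w : ι → ℝ} {a M : ℝ}

theorem tendsto_add_atTop_of_tendsto_inv_mul (hc : Tendsto c l atTop)
    (hu : Tendsto (fun k => (c k)⁻¹ * u k) l (𝓝 a)) (ha : 0 < a) (hw : ∀ k, |w k| ≤ M) :
    Tendsto (fun k => w k + u k) l atTop := by
  refine tendsto_atTop_add_left_of_le l (-M) (fun k => (abs_le.mp (hw k)).1) ?_
  refine (hc.atTop_mul_pos ha hu).congr' ?_
  filter_upwards [hc.eventually_gt_atTop 0] with k hk
  rw [mul_inv_cancel_left₀ hk.ne']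

theorem tendsto_add_atBot_of_tendsto_inv_mul (hc : Tendsto c l atTop)
    (hu : Tendsto (fun k => (c k)⁻¹ * u k) l (𝓝 a)) (ha : a < 0) (hw : ∀ k, |w k| ≤ M) :
    Tendsto (fun k => w k + u k) l atBot := by
  refine tendsto_atBot_add_left_of_ge l M (fun k => (abs_le.mp (hw k)).2) ?_
  refine (hc.atTop_mul_neg ha hu).congr' ?_
  filter_upwards [hc.eventually_gt_atTop 0] with k hk
  rw [mul_inv_cancel_left₀ hk.ne']

theorem tendsto_apply_add_mul_of_tendstoUniformly {β : Type*} {F : ℝ → β → ℝ} {bp bm : ℝ}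
    (hp : TendstoUniformly F (fun _ => bp) atTop) (hn : TendstoUniformly F (fun _ => bm) atBot)
    (hc : Tendsto c l atTop) (hu : Tendsto (fun k => (c k)⁻¹ * u k) l (𝓝 a))
    (hw : ∀ k, |w k| ≤ M) (y : ι → β) :
    Tendsto (fun k => F (w k + u k) (y k) * a) l (𝓝 ((if 0 < a then bp else bm) * a)) := by
  rcases lt_trichotomy a 0 with ha | rfl | ha
  · rw [if_neg ha.not_gt]
    exact ((hn.tendsto_apply_of_const
      (tendsto_add_atBot_of_tendsto_inv_mul hc hu ha hw) y)).mul_const a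
  · simpa using tendsto_const_nhds
  · rw [if_pos ha]
    exact ((hp.tendsto_apply_of_const
      (tendsto_add_atTop_of_tendsto_inv_mul hc hu ha hw) y)).mul_const a

end Asymptotics

theorem ContinuousOn.aestronglyMeasurable_comp_prodMk {α β γ : Type*}
    [TopologicalSpace α] [MeasurableSpace α] [TopologicalSpace β] [MeasurableSpace β]
    [OpensMeasurableSpace (α × β)] [TopologicalSpace γ] [TopologicalSpace.PseudoMetrizableSpace γ]
    [SecondCountableTopologyEither (α × β) γ]
    {F : α × β → γ} {s : Set α} (hs : MeasurableSet s) (hF : ContinuousOn F (s ×ˢ Set.univ))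
    {q : α → β} (hq : Measurable q) (μ : Measure α) :
    AEStronglyMeasurable (fun x => F (x, q x)) (μ.restrict s) := by
  have hq' : Measurable fun x => (x, q x) := measurable_id.prodMk hq
  have hmem : ∀ᵐ p ∂(μ.restrict s).map (fun x => (x, q x)), p ∈ s ×ˢ Set.univ :=
    (ae_map_iff hq'.aemeasurable (hs.prod .univ)).mpr <|
      (ae_restrict_mem hs).mono fun x hx => ⟨hx, trivial⟩
  have hF' := hF.aestronglyMeasurable (μ := (μ.restrict s).map (fun x => (x, q x)))
    (hs.prod .univ)
  rw [Measure.restrict_eq_self_of_ae_mem hmem] at hF'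
  exact hF'.comp_measurable hq'

theorem Lp.integral_mul_coeFn_smul {α : Type*} [MeasurableSpace α] {μ : Measure α} {p : ENNReal}
    (g : α → ℝ) (c : ℝ) (h : Lp ℝ p μ) :
    ∫ x, g x * (c • h) x ∂μ = c * ∫ x, g x * h x ∂μ := by
  rw [← integral_const_mul]
  refine integral_congr_ae ?_
  filter_upwards [Lp.coeFn_smul c h] with x hx
  simp only [hx, Pi.smul_apply, smul_eq_mul]
  ring

section BoundedMultiplier

variable {α : Type*} [MeasurableSpace α] {μ : Measure α} {m : ℝ}

theorem ae_norm_mul_le_of_abs_le {g h : α → ℝ} (hgb : ∀ᵐ x ∂μ, |g x| ≤ m) :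
    ∀ᵐ x ∂μ, ‖g x * h x‖ ≤ m * |h x| := by
  filter_upwards [hgb] with x hx
  rw [Real.norm_eq_abs, abs_mul]
  exact mul_le_mul_of_nonneg_right hx (abs_nonneg _)

variable [IsFiniteMeasure μ]

theorem abs_integral_mul_le_of_ae_bound {g : α → ℝ} (hm : 0 ≤ m)
    (hg : AEStronglyMeasurable g μ) (hgb : ∀ᵐ x ∂μ, |g x| ≤ m) (h : Lp ℝ 2 μ) :
    |∫ x, g x * h x ∂μ| ≤ (measureUnivNNReal μ ^ (2 : ENNReal).toReal⁻¹ * m) * ‖h‖ := by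
  have hgL2 : MemLp g 2 μ := MemLp.of_bound hg m (by simpa only [Real.norm_eq_abs] using hgb)
  have hinner : ∫ x, g x * h x ∂μ = inner ℝ (hgL2.toLp g) h := by
    rw [L2.inner_def]
    refine integral_congr_ae ?_
    filter_upwards [hgL2.coeFn_toLp] with x hx
    simp [hx, mul_comm]
  rw [hinner]
  refine (abs_real_inner_le_norm _ _).trans (mul_le_mul_of_nonneg_right ?_ (norm_nonneg _))
  refine Lp.norm_le_of_ae_bound hm ?_
  filter_upwards [hgL2.coeFn_toLp, hgb] with x hx hxb
  rwa [hx, Real.norm_eq_abs]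

theorem tendsto_integral_mul_of_tendsto_zero {ι : Type*} {g : ι → α → ℝ} (hm : 0 ≤ m)
    (hg : ∀ k, AEStronglyMeasurable (g k) μ) (hgb : ∀ k, ∀ᵐ x ∂μ, |g k x| ≤ m)
    {l : Filter ι} {h : ι → Lp ℝ 2 μ} (hh : Tendsto h l (𝓝 0)) :
    Tendsto (fun k => ∫ x, g k x * h k x ∂μ) l (𝓝 0) := by
  refine squeeze_zero_norm (fun k => abs_integral_mul_le_of_ae_bound hm (hg k) (hgb k) (h k)) ?_
  simpa using (tendsto_norm_zero.comp hh).const_mul _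

theorem integrable_of_ae_tendsto_mul {g : ℕ → α → ℝ} (hg : ∀ k, AEStronglyMeasurable (g k) μ)
    (hgb : ∀ k, ∀ᵐ x ∂μ, |g k x| ≤ m) (v : Lp ℝ 2 μ) {L : α → ℝ}
    (hL : ∀ᵐ x ∂μ, Tendsto (fun k => g k x * v x) atTop (𝓝 (L x))) : Integrable L μ :=
  ⟨aestronglyMeasurable_of_tendsto_ae atTop (fun k => (hg k).mul (Lp.aestronglyMeasurable v)) hL,
    hasFiniteIntegral_of_dominated_convergence
      (((Lp.memLp v).integrable (by norm_num)).abs.const_mul m).hasFiniteIntegral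
      (fun k => ae_norm_mul_le_of_abs_le (hgb k)) hL⟩

theorem tendsto_integral_mul_of_tendsto_Lp {g : ℕ → α → ℝ} (hm : 0 ≤ m)
    (hg : ∀ k, AEStronglyMeasurable (g k) μ) (hgb : ∀ k, ∀ᵐ x ∂μ, |g k x| ≤ m)
    {v : ℕ → Lp ℝ 2 μ} {v₀ : Lp ℝ 2 μ} (hv : Tendsto v atTop (𝓝 v₀)) {L : α → ℝ}
    (hL : ∀ᵐ x ∂μ, Tendsto (fun k => g k x * v₀ x) atTop (𝓝 (L x))) :
    Tendsto (fun k => ∫ x, g k x * v k x ∂μ) atTop (𝓝 (∫ x, L x ∂μ)) := by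
  have hint : ∀ k (h : Lp ℝ 2 μ), Integrable (fun x => g k x * h x) μ := fun k h =>
    ((Lp.memLp h).integrable (by norm_num)).bdd_mul (hg k)
      (by simpa only [Real.norm_eq_abs] using hgb k)
  have hsplit : ∀ k, ∫ x, g k x * v k x ∂μ
      = ∫ x, g k x * v₀ x ∂μ + ∫ x, g k x * (v k - v₀) x ∂μ := by
    intro k
    rw [← integral_add (hint k v₀) (hint k (v k - v₀))]
    refine integral_congr_ae ?_
    filter_upwards [Lp.coeFn_sub (v k) v₀] with x hx
    simp only [hx, Pi.sub_apply]
    ring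
  have hdom : Tendsto (fun k => ∫ x, g k x * v₀ x ∂μ) atTop (𝓝 (∫ x, L x ∂μ)) :=
    tendsto_integral_of_dominated_convergence _ (fun k => (hg k).mul (Lp.aestronglyMeasurable v₀))
      (((Lp.memLp v₀).integrable (by norm_num)).abs.const_mul m)
      (fun k => ae_norm_mul_le_of_abs_le (hgb k)) hL
  have herr := tendsto_integral_mul_of_tendsto_zero hm hg hgb (tendsto_sub_nhds_zero_iff.mpr hv)
  simpa only [hsplit, add_zero] using hdom.add herr

end BoundedMultiplier

theorem integral_ite_pos_mul_eq {α : Type*} [MeasurableSpace α] {μ : Measure α} {a b v : α → ℝ}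
    (hv : Measurable v) (hint : Integrable (fun x => (if 0 < v x then a x else b x) * v x) μ) :
    ∫ x, (if 0 < v x then a x else b x) * v x ∂μ
      = ∫ x in {x | 0 < v x}, a x * v x ∂μ + ∫ x in {x | v x < 0}, b x * v x ∂μ := by
  have hpos : MeasurableSet {x | 0 < v x} := measurableSet_lt measurable_const hv
  have hneg : MeasurableSet {x | v x < 0} := measurableSet_lt hv measurable_const
  have hon_pos : ∫ x in {x | 0 < v x}, (if 0 < v x then a x else b x) * v x ∂μ
      = ∫ x in {x | 0 < v x}, a x * v x ∂μ :=
    setIntegral_congr_fun hpos fun x (hx : 0 < v x) => by simp [hx]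
  have hon_neg : ∫ x in {x | 0 < v x}ᶜ, (if 0 < v x then a x else b x) * v x ∂μ
      = ∫ x in {x | v x < 0}, b x * v x ∂μ := by
    rw [setIntegral_eq_of_subset_of_forall_sdiff_eq_zero (s := {x | v x < 0}) hpos.compl
      (fun x (hx : v x < 0) => hx.not_gt) ?_]
    · exact setIntegral_congr_fun hneg fun x (hx : v x < 0) => by simp [hx.not_gt]
    · rintro x ⟨hx : ¬0 < v x, hx' : ¬v x < 0⟩
      simp [le_antisymm (not_lt.mp hx) (not_lt.mp hx')]
  rw [← integral_add_compl hpos hint, hon_pos, hon_neg]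

theorem Submodule.exists_subseq_tendsto_inv_norm_smul {E : Type*} [NormedAddCommGroup E]
    [NormedSpace ℝ E] (X : Submodule ℝ E) [FiniteDimensional ℝ X] {u : ℕ → E}
    (hu : ∀ k, u k ∈ X) (hu0 : ∀ k, u k ≠ 0) :
    ∃ v ∈ X, ‖v‖ = 1 ∧ ∃ φ : ℕ → ℕ, StrictMono φ ∧
      Tendsto (fun k => ‖u (φ k)‖⁻¹ • u (φ k)) atTop (𝓝 v) := by
  have : ProperSpace X := FiniteDimensional.proper ℝ X
  let V : ℕ → X := fun k => ‖u k‖⁻¹ • ⟨u k, hu k⟩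
  have hV : ∀ k, V k ∈ Metric.sphere 0 1 := fun k => by
    simp [V, norm_smul, hu0 k]
  obtain ⟨v, hv, φ, hφ, hlim⟩ := (isCompact_sphere 0 1).tendsto_subseq hV
  exact ⟨v, v.2, by simpa using hv, φ, hφ, (continuous_subtype_val.tendsto v).comp hlim⟩

theorem Lp.exists_subseq_tendsto_inv_norm_smul_ae {α : Type*} [MeasurableSpace α] {μ : Measure α}
    {p : ENNReal} [Fact (1 ≤ p)] (X : Submodule ℝ (Lp ℝ p μ)) [FiniteDimensional ℝ X]
    {u : ℕ → Lp ℝ p μ} (hu : ∀ k, u k ∈ X) (hu0 : ∀ k, u k ≠ 0) :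
    ∃ v ∈ X, v ≠ 0 ∧ ∃ φ : ℕ → ℕ, StrictMono φ ∧
      Tendsto (fun k => ‖u (φ k)‖⁻¹ • u (φ k)) atTop (𝓝 v) ∧
      ∀ᵐ x ∂μ, Tendsto (fun k => ‖u (φ k)‖⁻¹ * u (φ k) x) atTop (𝓝 (v x)) := by
  obtain ⟨v, hvX, hv1, φ, hφ, hlim⟩ := X.exists_subseq_tendsto_inv_norm_smul hu hu0
  obtain ⟨ψ, hψ, hae⟩ := (tendstoInMeasure_of_tendsto_Lp hlim).exists_seq_tendsto_ae
  refine ⟨v, hvX, norm_ne_zero_iff.mp (by simp [hv1]), φ ∘ ψ, hφ.comp hψ,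
    hlim.comp hψ.tendsto_atTop, ?_⟩
  have hsmul : ∀ᵐ x ∂μ, ∀ k, (‖u k‖⁻¹ • u k) x = ‖u k‖⁻¹ * u k x :=
    ae_all_iff.mpr fun k => (Lp.coeFn_smul _ (u k)).mono fun x hx => hx
  filter_upwards [hae, hsmul] with x hx hxs
  simpa only [Function.comp_apply, hxs] using hx

theorem stmt_6_general
    {n : ℕ} (Ω : Set (Fin n → ℝ)) (hΩo : IsOpen Ω)
    (hΩb : Bornology.IsBounded Ω)
    (m : ℝ) (hm : 0 < m)
    (f : (Fin n → ℝ) → ℝ → (Fin n → ℝ) → ℝ)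
    (hf : ContinuousOn (fun p : (Fin n → ℝ) × ℝ × (Fin n → ℝ) => f p.1 p.2.1 p.2.2)
      (Ω ×ˢ (Set.univ : Set (ℝ × (Fin n → ℝ)))))
    (hfb : ∀ x ∈ Ω, ∀ (s : ℝ) (y : Fin n → ℝ), |f x s y| ≤ m)
    (fp fm : (Fin n → ℝ) → ℝ)
    (hlimp : ∀ x ∈ Ω, TendstoUniformly (fun (s : ℝ) (y : Fin n → ℝ) => f x s y)
      (fun _ => fp x) atTop)
    (hlimm : ∀ x ∈ Ω, TendstoUniformly (fun (s : ℝ) (y : Fin n → ℝ) => f x s y)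
      (fun _ => fm x) atBot)
    (X₀ : Submodule ℝ (Lp ℝ 2 (volume.restrict Ω))) (hX₀ : FiniteDimensional ℝ X₀)
    (hLL2 : ∀ u : Lp ℝ 2 (volume.restrict Ω), u ∈ X₀ → u ≠ 0 →
      (∫ x in {x | 0 < u x}, fp x * u x ∂(volume.restrict Ω)) +
          (∫ x in {x | u x < 0}, fm x * u x ∂(volume.restrict Ω)) < 0) :
    ∀ M : ℝ, 0 < M → ∃ R : ℝ, 0 < R ∧
      ∀ w : (Fin n → ℝ) → ℝ, Measurable w →
        (∀ᵐ x ∂(volume.restrict Ω), |w x| ≤ M) →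
      ∀ y : (Fin n → ℝ) → (Fin n → ℝ), Measurable y →
      ∀ u : Lp ℝ 2 (volume.restrict Ω), u ∈ X₀ → R ≤ ‖u‖ →
        (∫ x, f x (w x + u x) (y x) * u x ∂(volume.restrict Ω)) < 0 := by
  intro M _
  by_contra! hcon
  have : IsFiniteMeasure (volume.restrict Ω) :=
    isFiniteMeasure_restrict.mpr hΩb.measure_lt_top.ne
  choose w hwm hwb y hym u hu hRu hnonneg using fun k : ℕ => hcon (k + 1) (by positivity)
  have hu0 : ∀ k, u k ≠ 0 := fun k =>
    norm_pos_iff.mp ((by positivity : (0 : ℝ) < k + 1).trans_le (hRu k))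
  obtain ⟨v, hvX, hv0, φ, hφ, hvL2, hvae⟩ := Lp.exists_subseq_tendsto_inv_norm_smul_ae X₀ hu hu0
  set g : ℕ → (Fin n → ℝ) → ℝ := fun k x => f x (w (φ k) x + u (φ k) x) (y (φ k) x)
  have hg : ∀ k, AEStronglyMeasurable (g k) (volume.restrict Ω) := fun k =>
    hf.aestronglyMeasurable_comp_prodMk hΩo.measurableSet
      (((hwm _).add (Lp.stronglyMeasurable _).measurable).prodMk (hym _)) _
  have hgb : ∀ k, ∀ᵐ x ∂(volume.restrict Ω), |g k x| ≤ m := fun k =>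
    (ae_restrict_mem hΩo.measurableSet).mono fun x hx => hfb x hx _ _
  have hnorm : Tendsto (fun k => ‖u (φ k)‖) atTop atTop := by
    refine tendsto_atTop_mono (fun k => ?_) tendsto_natCast_atTop_atTop
    have hk : (k : ℝ) ≤ φ k := by exact_mod_cast hφ.le_apply
    linarith [hRu (φ k)]
  have hlim : ∀ᵐ x ∂(volume.restrict Ω), Tendsto (fun k => g k x * v x) atTop
      (𝓝 ((if 0 < v x then fp x else fm x) * v x)) := by
    filter_upwards [ae_restrict_mem hΩo.measurableSet, hvae, ae_all_iff.mpr fun k => hwb (φ k)]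
      with x hx hxv hxw
    exact tendsto_apply_add_mul_of_tendstoUniformly (hlimp x hx) (hlimm x hx) hnorm hxv hxw _
  have hsplit := integral_ite_pos_mul_eq (Lp.stronglyMeasurable v).measurable
    (integrable_of_ae_tendsto_mul hg hgb v hlim)
  have hnonneg' : ∀ k, 0 ≤ ∫ x, g k x * (‖u (φ k)‖⁻¹ • u (φ k)) x ∂(volume.restrict Ω) :=
    fun k => by
      rw [Lp.integral_mul_coeFn_smul]
      exact mul_nonneg (inv_nonneg.mpr (norm_nonneg _)) (hnonneg _)
  have hlim_nonneg :=
    ge_of_tendsto' (tendsto_integral_mul_of_tendsto_Lp hm.le hg hgb hvL2 hlim) hnonneg'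
  linarith [hLL2 v hvX hv0]

/-- Theorem 4.3(ii) of the paper: the Landesman–Lazer condition (LL2) implies the
geometric condition (G2) for the Niemytzki operator. -/
theorem stmt_6
    {n : ℕ} (Ω : Set (Fin n → ℝ)) (hΩne : Ω.Nonempty) (hΩo : IsOpen Ω)
    (hΩb : Bornology.IsBounded Ω)
    (m : ℝ) (hm : 0 < m)
    (f : (Fin n → ℝ) → ℝ → (Fin n → ℝ) → ℝ)
    (hf : ContinuousOn (fun p : (Fin n → ℝ) × ℝ × (Fin n → ℝ) => f p.1 p.2.1 p.2.2)
      (Ω ×ˢ (Set.univ : Set (ℝ × (Fin n → ℝ)))))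
    (hfb : ∀ x ∈ Ω, ∀ (s : ℝ) (y : Fin n → ℝ), |f x s y| ≤ m)
    (fp fm : (Fin n → ℝ) → ℝ)
    (hfpc : ContinuousOn fp Ω) (hfmc : ContinuousOn fm Ω)
    (hlimp : ∀ x ∈ Ω, TendstoUniformly (fun (s : ℝ) (y : Fin n → ℝ) => f x s y)
      (fun _ => fp x) atTop)
    (hlimm : ∀ x ∈ Ω, TendstoUniformly (fun (s : ℝ) (y : Fin n → ℝ) => f x s y)
      (fun _ => fm x) atBot)
    (X₀ : Submodule ℝ (Lp ℝ 2 (volume.restrict Ω))) (hX₀ : FiniteDimensional ℝ X₀)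
    (hLL2 : ∀ u : Lp ℝ 2 (volume.restrict Ω), u ∈ X₀ → u ≠ 0 →
      (∫ x in {x | 0 < u x}, fp x * u x ∂(volume.restrict Ω)) +
          (∫ x in {x | u x < 0}, fm x * u x ∂(volume.restrict Ω)) < 0) :
    ∀ M : ℝ, 0 < M → ∃ R : ℝ, 0 < R ∧
      ∀ w : (Fin n → ℝ) → ℝ, Measurable w →
        (∀ᵐ x ∂(volume.restrict Ω), |w x| ≤ M) →
      ∀ y : (Fin n → ℝ) → (Fin n → ℝ), Measurable y →
      ∀ u : Lp ℝ 2 (volume.restrict Ω), u ∈ X₀ → R ≤ ‖u‖ →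
        (∫ x, f x (w x + u x) (y x) * u x ∂(volume.restrict Ω)) < 0 :=
  stmt_6_general Ω hΩo hΩb m hm f hf hfb fp fm hlimp hlimm X₀ hX₀ hLL2
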